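/- The Start Axiom is realizable by extending a team: given a team X over domain V, tuples a⃗, b⃗, c⃗ of variables from V, and a tuple x⃗ of pairwise distinct fresh variables with |x⃗| = |c⃗|, there exists a team X' extending X (obtained by assigning values to the variables of x⃗, i.e., X' restricted to V equals X) such that X' satisfies a⃗c⃗ ⊆ a⃗x⃗, b⃗ ⊥_{a⃗} x⃗, and a⃗x⃗ ⊆ a⃗c⃗. Specifically, X' = { s[t/x⃗] : s ∈ X, t ∈ { s'(c⃗) : s' ∈ X, s'(a⃗) = s(a⃗) } } works. -/

import Mathlib

/-!
Extend each `s ∈ X` by every value `s'(c⃗)` that some `s' ∈ X` agreeing with `s` on `a⃗` takes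
on `c⃗`. Keeping `s` itself as `s'` gives `a⃗c⃗ ⊆ a⃗x⃗` and shows that nothing is lost on `V`;
the choice of `x⃗` depends on `s` only through `s(a⃗)`, which gives `b⃗ ⊥_{a⃗} x⃗`; and every value
of `a⃗x⃗` is a value `s'(a⃗c⃗)`, which gives `a⃗x⃗ ⊆ a⃗c⃗`.
-/

/-- A team is a set of assignments; the inclusion atom `x ⊆ y` holds in team `X`
iff for every `s ∈ X` there is `s' ∈ X` with `s(x) = s'(y)` componentwise. -/
def InclAtom {M Var : Type*} {n : ℕ} (X : Set (Var → M)) (x y : Fin n → Var) : Prop :=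
  ∀ s ∈ X, ∃ s' ∈ X, ∀ i, s (x i) = s' (y i)

/-- The conditional independence atom `y ⊥_x z` holds in team `X` iff for all
`s, s' ∈ X` agreeing on `x` there is `s'' ∈ X` with `s''(x) = s(x)`,
`s''(y) = s(y)` and `s''(z) = s'(z)`. -/
def IndepAtom {M Var : Type*} {k m n : ℕ} (X : Set (Var → M)) (x : Fin k → Var)
    (y : Fin m → Var) (z : Fin n → Var) : Prop :=
  ∀ s ∈ X, ∀ s' ∈ X, (∀ i, s (x i) = s' (x i)) →
    ∃ s'' ∈ X, (∀ i, s'' (x i) = s (x i)) ∧ (∀ i, s'' (y i) = s (y i)) ∧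
      (∀ i, s'' (z i) = s' (z i))

theorem inclAtom_append_iff {M Var : Type*} {k n : ℕ} (X : Set (Var → M))
    (x x' : Fin k → Var) (y y' : Fin n → Var) :
    InclAtom X (Fin.append x y) (Fin.append x' y') ↔
      ∀ s ∈ X, ∃ s' ∈ X, (∀ i, s (x i) = s' (x' i)) ∧ ∀ j, s (y j) = s' (y' j) := by
  simp only [InclAtom, Fin.forall_fin_add, Fin.append_left, Fin.append_right]

section StartExtension

variable {M V : Type*} {k m n : ℕ} {X : Set (V → M)} {a : Fin k → V} {c : Fin n → V}

/-- The team `{ s[t/x⃗] : s ∈ X, t ∈ { s'(c⃗) : s' ∈ X, s'(a⃗) = s(a⃗) } }`, with the fresh variables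
`x⃗` as the summand `Fin n`. -/
def startExtension (X : Set (V → M)) (a : Fin k → V) (c : Fin n → V) : Set (V ⊕ Fin n → M) :=
  {t | ∃ s ∈ X, ∃ s' ∈ X, (∀ i, s (a i) = s' (a i)) ∧ t = Sum.elim s (s' ∘ c)}

theorem elim_mem_startExtension {s s' : V → M} (hs : s ∈ X) (hs' : s' ∈ X)
    (ha : ∀ i, s (a i) = s' (a i)) : Sum.elim s (s' ∘ c) ∈ startExtension X a c :=
  ⟨s, hs, s', hs', ha, rfl⟩

theorem elim_self_mem_startExtension {s : V → M} (hs : s ∈ X) :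
    Sum.elim s (s ∘ c) ∈ startExtension X a c :=
  elim_mem_startExtension hs hs fun _ => rfl

theorem restrict_startExtension :
    (fun t : V ⊕ Fin n → M => t ∘ Sum.inl) '' startExtension X a c = X := by
  ext s
  constructor
  · rintro ⟨_, ⟨s, hs, s', -, -, rfl⟩, rfl⟩
    exact hs
  · exact fun hs => ⟨_, elim_self_mem_startExtension hs, rfl⟩

theorem inclAtom_startExtension_source_fresh :
    InclAtom (startExtension X a c) (Fin.append (Sum.inl ∘ a) (Sum.inl ∘ c))
      (Fin.append (Sum.inl ∘ a) Sum.inr) := by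
  rw [inclAtom_append_iff]
  rintro _ ⟨s, hs, s', -, -, rfl⟩
  exact ⟨_, elim_self_mem_startExtension hs, fun _ => rfl, fun _ => rfl⟩

theorem indepAtom_startExtension (b : Fin m → V) :
    IndepAtom (startExtension X a c) (Sum.inl ∘ a) (Sum.inl ∘ b) Sum.inr := by
  rintro _ ⟨s, hs, s', -, -, rfl⟩ _ ⟨r, -, r', hr', hr, rfl⟩ ha
  exact ⟨_, elim_mem_startExtension hs hr' fun i => (ha i).trans (hr i),
    fun _ => rfl, fun _ => rfl, fun _ => rfl⟩

theorem inclAtom_startExtension_fresh_source :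
    InclAtom (startExtension X a c) (Fin.append (Sum.inl ∘ a) Sum.inr)
      (Fin.append (Sum.inl ∘ a) (Sum.inl ∘ c)) := by
  rw [inclAtom_append_iff]
  rintro _ ⟨s, -, s', hs', ha, rfl⟩
  exact ⟨_, elim_self_mem_startExtension hs', ha, fun _ => rfl⟩

end StartExtension

/-- The fresh variables `x⃗` are modelled by the summand `Fin n` of `V ⊕ Fin n`, which makes them
pairwise distinct and disjoint from `V`. -/
theorem start_axiom {M V : Type*} {k m n : ℕ} (X : Set (V → M))
    (a : Fin k → V) (b : Fin m → V) (c : Fin n → V) :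
    ∃ X' : Set ((V ⊕ Fin n) → M),
      ((fun t : (V ⊕ Fin n) → M => t ∘ Sum.inl) '' X' = X) ∧
      InclAtom X' (Fin.append (Sum.inl ∘ a) (Sum.inl ∘ c))
        (Fin.append (Sum.inl ∘ a) Sum.inr) ∧
      IndepAtom X' (Sum.inl ∘ a) (Sum.inl ∘ b) Sum.inr ∧
      InclAtom X' (Fin.append (Sum.inl ∘ a) Sum.inr)
        (Fin.append (Sum.inl ∘ a) (Sum.inl ∘ c)) :=
  ⟨startExtension X a c, restrict_startExtension, inclAtom_startExtension_source_fresh,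
    indepAtom_startExtension b, inclAtom_startExtension_fresh_source⟩
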